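/- arXiv:2209.06134 — 2 statements merged into one kernel-verified Lean document; each statement's English description precedes it below -/
import Mathlib

section
/- For every real M > −1/(3√3), set t_A(M) = (1 + √(1 + 3√3·M))/√3 and define β̂_M(t) = (1/3)(3/2 − √(W_M(t))/t − W_M'(t)/(4√(W_M(t)))) on (t₊(M), ∞). Then t₊(M) < t_A(M), β̂_M(t_A(M)) = 0, β̂_M(t) < 0 for all t ∈ (t₊(M), t_A(M)), and β̂_M(t) > 0 for all t > t_A(M). (The hypersurface t = t_A(M) is the apparent horizon of the explicit cone-exterior solution, and (t₊(M), t_A(M)) is its trapped region.) -/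
noncomputable def Whp (M t : ℝ) : ℝ := t ^ 2 - 1 - 2 * M / t

noncomputable def Whp' (M t : ℝ) : ℝ := 2 * t + 2 * M / t ^ 2

/-- `β̂_M`, the renormalized self-similar quantity of the explicit cone-exterior
(Wick-rotated) solution. -/
noncomputable def betaW (M t : ℝ) : ℝ :=
  (1 / 3) * (3 / 2 - Real.sqrt (Whp M t) / t - Whp' M t / (4 * Real.sqrt (Whp M t)))

/-!
With `s = √W_M(t)` one has `6t²s · β̂_M(t) = 3t²s - B` for `B = 3t³ - 2t - 3M`, and
`(3t²s)² - B² = 9t³(t³ - t - 2M) - B² = (√3t² - 2t - 3M)(√3t² + 2t + 3M)`.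
For `t > 1/√3` and `M > -1/(3√3)` both `B` and `√3t² + 2t + 3M` are positive, so `β̂_M(t)` has
the sign of `√3t² - 2t - 3M = √3 (t - t_A)(t - t_B)` with `t_B = (1 - √(1 + 3√3M))/√3 < t`,
i.e. the sign of `t - t_A`. It remains to locate `t₊`: the cubic `t³ - t - 2M` is strictly
increasing on `[1/√3, ∞)`, negative at `1/√3` and equal to `t_A (t_A - 1/√3)² > 0` at `t_A`,
so `1/√3 < t₊ < t_A`.
-/

open Set

noncomputable def apparentHorizon (M : ℝ) : ℝ := (1 + √(1 + 3 * √3 * M)) / √3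

section

variable {M t tp x : ℝ}

lemma sqrt_three_mul_sqrt_three : √3 * √3 = 3 := Real.mul_self_sqrt (by norm_num)

lemma one_le_three_mul_sq (hx : 1 / √3 ≤ x) : 1 ≤ 3 * x ^ 2 := by
  have h : 1 ≤ √3 * x := by rwa [div_le_iff₀ (by positivity), mul_comm] at hx
  nlinarith [sqrt_three_mul_sqrt_three]

lemma Whp_mul_self (ht : t ≠ 0) : Whp M t * t = t ^ 3 - t - 2 * M := by
  unfold Whp
  field_simp

lemma cubic_strictMonoOn (c : ℝ) :
    StrictMonoOn (fun s : ℝ => s ^ 3 - s - c) (Ici (1 / √3)) := by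
  intro x hx y _ hxy
  have hx0 : 0 < x := lt_of_lt_of_le (by positivity) hx.out
  have hsum : 1 < x ^ 2 + x * y + y ^ 2 := by
    nlinarith [one_le_three_mul_sq hx.out]
  simp only
  nlinarith [mul_pos (sub_pos.2 hxy) (sub_pos.2 hsum)]

lemma one_add_pos_of_lt (hM : -1 / (3 * √3) < M) : 0 < 1 + 3 * √3 * M := by
  rw [div_lt_iff₀ (by positivity)] at hM
  linarith

lemma cubic_inv_sqrt_three_neg (hM : -1 / (3 * √3) < M) :
    (1 / √3) ^ 3 - 1 / √3 - 2 * M < 0 := by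
  have h : (1 / √3) ^ 3 - 1 / √3 = 2 * (-1 / (3 * √3)) := by
    field_simp
    nlinarith [sqrt_three_mul_sqrt_three]
  linarith

lemma inv_sqrt_three_lt_apparentHorizon (hM : -1 / (3 * √3) < M) :
    1 / √3 < apparentHorizon M := by
  unfold apparentHorizon
  gcongr
  linarith [Real.sqrt_pos.2 (one_add_pos_of_lt hM)]

lemma cubic_apparentHorizon_pos (hM : -1 / (3 * √3) < M) :
    0 < apparentHorizon M ^ 3 - apparentHorizon M - 2 * M := by
  have hcubic : apparentHorizon M ^ 3 - apparentHorizon M - 2 * M =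
      apparentHorizon M * (apparentHorizon M - 1 / √3) ^ 2 := by
    have hu := Real.sq_sqrt (one_add_pos_of_lt hM).le
    unfold apparentHorizon
    set u := √(1 + 3 * √3 * M)
    field_simp
    linear_combination (-(1 + u) - 2 * √3 * M) * sqrt_three_mul_sqrt_three + 2 * hu
  have hA := inv_sqrt_three_lt_apparentHorizon hM
  have := sub_pos.2 hA
  have : 0 < apparentHorizon M := lt_trans (by positivity) hA
  rw [hcubic]
  positivity

lemma quadratic_eq_mul_sub_apparentHorizon (hM : 0 ≤ 1 + 3 * √3 * M) (t : ℝ) :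
    √3 * t ^ 2 - 2 * t - 3 * M =
      √3 * (t - apparentHorizon M) * (t - (1 - √(1 + 3 * √3 * M)) / √3) := by
  have hu := Real.sq_sqrt hM
  unfold apparentHorizon
  set u := √(1 + 3 * √3 * M)
  field_simp
  linear_combination hu

lemma betaW_eq_div (ht : 0 < t) (hW : 0 < Whp M t) :
    betaW M t = (3 * t ^ 2 * √(Whp M t) - (3 * t ^ 3 - 2 * t - 3 * M)) /
      (6 * t ^ 2 * √(Whp M t)) := by
  have hs : √(Whp M t) ^ 2 * t = t ^ 3 - t - 2 * M := by
    rw [Real.sq_sqrt hW.le, Whp_mul_self ht.ne']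
  have := Real.sqrt_pos.2 hW
  unfold betaW Whp'
  field_simp
  linear_combination (-48) * hs

lemma betaW_eq_pos_mul_quadratic (hM : -1 / (3 * √3) < M) (ht : 1 / √3 < t)
    (hW : 0 < Whp M t) : ∃ C, 0 < C ∧ betaW M t = C * (√3 * t ^ 2 - 2 * t - 3 * M) := by
  have h3 := sqrt_three_mul_sqrt_three
  have hst : 1 < √3 * t := by rwa [div_lt_iff₀ (by positivity), mul_comm] at ht
  have ht0 : 0 < t := lt_trans (by positivity) ht
  have hM' := one_add_pos_of_lt hM
  have hs : 0 < √(Whp M t) := Real.sqrt_pos.2 hW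
  have hsq : √(Whp M t) ^ 2 * t = t ^ 3 - t - 2 * M := by
    rw [Real.sq_sqrt hW.le, Whp_mul_self ht0.ne']
  set s := √(Whp M t)
  have hQ : 0 < √3 * t ^ 2 + 2 * t + 3 * M := by
    have : 0 < √3 * (√3 * t ^ 2 + 2 * t + 3 * M) := by nlinarith
    exact pos_of_mul_pos_right this (by positivity)
  have hB : 0 < 3 * t ^ 3 - 2 * t - 3 * M := by
    have : 0 < √3 * (t + 3 * M) := by nlinarith
    nlinarith [pos_of_mul_pos_right this (by positivity), mul_pos (pow_pos hs 2) ht0]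
  have hdiff : (3 * t ^ 2 * s - (3 * t ^ 3 - 2 * t - 3 * M)) *
      (3 * t ^ 2 * s + (3 * t ^ 3 - 2 * t - 3 * M)) =
      (√3 * t ^ 2 - 2 * t - 3 * M) * (√3 * t ^ 2 + 2 * t + 3 * M) := by
    linear_combination (9 * t ^ 3) * hsq - t ^ 4 * h3
  refine ⟨(√3 * t ^ 2 + 2 * t + 3 * M) /
      ((3 * t ^ 2 * s + (3 * t ^ 3 - 2 * t - 3 * M)) * (6 * t ^ 2 * s)), by positivity, ?_⟩
  rw [betaW_eq_div ht0 hW, div_mul_eq_mul_div, div_eq_div_iff (by positivity) (by positivity)]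
  linear_combination (6 * t ^ 2 * s) * hdiff

lemma betaW_eq_pos_mul_sub_apparentHorizon (hM : -1 / (3 * √3) < M)
    (ht : 1 / √3 < t) (hW : 0 < Whp M t) :
    ∃ C, 0 < C ∧ betaW M t = C * (t - apparentHorizon M) := by
  obtain ⟨C, hC, hβ⟩ := betaW_eq_pos_mul_quadratic hM ht hW
  have hM' := (one_add_pos_of_lt hM).le
  have hB : (1 - √(1 + 3 * √3 * M)) / √3 < t :=
    lt_of_le_of_lt (by gcongr; exact sub_le_self _ (Real.sqrt_nonneg _)) ht
  refine ⟨C * √3 * (t - (1 - √(1 + 3 * √3 * M)) / √3), by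
    have := sub_pos.2 hB; positivity, ?_⟩
  rw [hβ, quadratic_eq_mul_sub_apparentHorizon hM']
  ring

lemma inv_sqrt_three_lt_of_isGreatest (hM : -1 / (3 * √3) < M)
    (htp : IsGreatest {s : ℝ | s ^ 3 - s - 2 * M = 0} tp) : 1 / √3 < tp := by
  have hA := inv_sqrt_three_lt_apparentHorizon hM
  have hneg := cubic_inv_sqrt_three_neg hM
  obtain ⟨r, hr, hr0⟩ := intermediate_value_Icc hA.le
    (by fun_prop : ContinuousOn (fun s : ℝ => s ^ 3 - s - 2 * M) _)
    ⟨hneg.le, (cubic_apparentHorizon_pos hM).le⟩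
  have hr' : 1 / √3 < r := lt_of_le_of_ne hr.1 (by rintro rfl; exact hneg.ne hr0)
  exact lt_of_lt_of_le hr' (htp.2 hr0)

lemma lt_apparentHorizon_of_isGreatest (hM : -1 / (3 * √3) < M)
    (htp : IsGreatest {s : ℝ | s ^ 3 - s - 2 * M = 0} tp) : tp < apparentHorizon M := by
  refine (cubic_strictMonoOn (2 * M)).lt_iff_lt ?_ ?_ |>.1 ?_
  · exact (inv_sqrt_three_lt_of_isGreatest hM htp).le
  · exact (inv_sqrt_three_lt_apparentHorizon hM).le
  · simpa only [htp.1.out] using cubic_apparentHorizon_pos hM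

lemma Whp_pos_of_isGreatest_lt (hM : -1 / (3 * √3) < M)
    (htp : IsGreatest {s : ℝ | s ^ 3 - s - 2 * M = 0} tp) (ht : tp < t) : 0 < Whp M t := by
  have htp' := inv_sqrt_three_lt_of_isGreatest hM htp
  have hcubic : 0 < t ^ 3 - t - 2 * M := by
    simpa only [htp.1.out] using
      cubic_strictMonoOn (2 * M) htp'.le (htp'.trans ht).le ht
  have ht0 : 0 < t := lt_trans (by positivity) (htp'.trans ht)
  rw [← Whp_mul_self ht0.ne'] at hcubic
  exact pos_of_mul_pos_left hcubic ht0.le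

end

/-- For every `M > −1/(3√3)`, with `t_A(M) = (1 + √(1 + 3√3·M))/√3`:
`t₊(M) < t_A(M)`, `β̂_M(t_A(M)) = 0`, `β̂_M < 0` on `(t₊(M), t_A(M))`, and `β̂_M > 0`
on `(t_A(M), ∞)`. -/
theorem apparent_horizon_of_explicit_solution (M : ℝ)
    (hM : -1 / (3 * Real.sqrt 3) < M) (tp : ℝ)
    (htp : IsGreatest {s : ℝ | s ^ 3 - s - 2 * M = 0} tp) :
    tp < (1 + Real.sqrt (1 + 3 * Real.sqrt 3 * M)) / Real.sqrt 3 ∧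
    betaW M ((1 + Real.sqrt (1 + 3 * Real.sqrt 3 * M)) / Real.sqrt 3) = 0 ∧
    (∀ t : ℝ, tp < t → t < (1 + Real.sqrt (1 + 3 * Real.sqrt 3 * M)) / Real.sqrt 3 →
      betaW M t < 0) ∧
    (∀ t : ℝ, (1 + Real.sqrt (1 + 3 * Real.sqrt 3 * M)) / Real.sqrt 3 < t →
      0 < betaW M t) := by
  rw [show (1 + √(1 + 3 * √3 * M)) / √3 = apparentHorizon M from rfl]
  have htpA : tp < apparentHorizon M := lt_apparentHorizon_of_isGreatest hM htp
  have hsign : ∀ t, tp < t → ∃ C, 0 < C ∧ betaW M t = C * (t - apparentHorizon M) :=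
    fun t ht => betaW_eq_pos_mul_sub_apparentHorizon hM
      ((inv_sqrt_three_lt_of_isGreatest hM htp).trans ht) (Whp_pos_of_isGreatest_lt hM htp ht)
  refine ⟨htpA, ?_, fun t ht htA => ?_, fun t htA => ?_⟩
  · obtain ⟨C, -, hβ⟩ := hsign _ htpA
    rw [hβ, sub_self, mul_zero]
  · obtain ⟨C, hC, hβ⟩ := hsign t ht
    exact hβ ▸ mul_neg_of_pos_of_neg hC (sub_neg.2 htA)
  · obtain ⟨C, hC, hβ⟩ := hsign t (htpA.trans htA)
    exact hβ ▸ mul_pos hC (sub_pos.2 htA)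
end

section
/- For every real M > −1/(3√3), define on (t₊(M), ∞): β̂_M(t) = (1/3)(3/2 − √(W_M(t))/t − W_M'(t)/(4√(W_M(t)))) and θ̂_M(t) = √3·t·(W_M'(t) − 2√(W_M(t)))/(4W_M(t) + t·W_M'(t) − 6t·√(W_M(t))). Then lim_{t→t₊(M)⁺} θ̂_M(t) = √3, lim_{t→∞} θ̂_M(t) = −√3, lim_{t→t₊(M)⁺} β̂_M(t) = −∞, and lim_{t→∞} β̂_M(t) = 0. (In the (θ, α) plane with α = 1/β, the orbit of the explicit exterior solution runs from the singular point at θ = −√3 to the critical point (√3, 0) at the null boundary.) -/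
/-- `θ̂_M`, the renormalized self-similar quantity of the explicit cone-exterior
(Wick-rotated) solution. -/
noncomputable def thetaW (M t : ℝ) : ℝ :=
  Real.sqrt 3 * t * (Whp' M t - 2 * Real.sqrt (Whp M t)) /
    (4 * Whp M t + t * Whp' M t - 6 * t * Real.sqrt (Whp M t))

open Filter Topology

section Cubic

variable {c a t tp : ℝ}

lemma exists_cubic_root_ge_of_nonpos (ha : a ^ 3 - a - c ≤ 0) :
    ∃ s, a ≤ s ∧ s ^ 3 - s - c = 0 := by
  set T := max a (|c| + 2)
  have hT2 : 2 ≤ T := le_max_of_le_right (by linarith [abs_nonneg c])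
  have hT : 0 ≤ T ^ 3 - T - c := by
    nlinarith [le_abs_self c, le_max_right a (|c| + 2),
      mul_nonneg (by linarith : (0 : ℝ) ≤ T) (by nlinarith : (0 : ℝ) ≤ T ^ 2 - 4)]
  obtain ⟨s, hs, hfs⟩ := intermediate_value_Icc (le_max_left a _)
    (by fun_prop : Continuous fun s : ℝ => s ^ 3 - s - c).continuousOn ⟨ha, hT⟩
  exact ⟨s, hs.1, hfs⟩

lemma cubic_pos_of_isGreatest_roots_lt (htp : IsGreatest {s : ℝ | s ^ 3 - s - c = 0} tp)
    (ht : tp < t) : 0 < t ^ 3 - t - c := by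
  by_contra! h
  obtain ⟨s, hts, hs⟩ := exists_cubic_root_ge_of_nonpos h
  exact (ht.trans_le hts).not_ge (htp.2 hs)

lemma lt_of_isGreatest_roots_of_cubic_neg (htp : IsGreatest {s : ℝ | s ^ 3 - s - c = 0} tp)
    (ha : a ^ 3 - a - c < 0) : a < tp := by
  obtain ⟨s, has, hs⟩ := exists_cubic_root_ge_of_nonpos ha.le
  refine (has.lt_of_ne ?_).trans_le (htp.2 hs)
  rintro rfl
  exact ha.ne hs

end Cubic

lemma one_div_sqrt_three_lt_of_isGreatest_roots {M tp : ℝ} (hM : -1 / (3 * Real.sqrt 3) < M)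
    (htp : IsGreatest {s : ℝ | s ^ 3 - s - 2 * M = 0} tp) : 1 / Real.sqrt 3 < tp := by
  refine lt_of_isGreatest_roots_of_cubic_neg htp ?_
  have h3 : Real.sqrt 3 ^ 2 = 3 := Real.sq_sqrt (by norm_num)
  have hcube : (1 / Real.sqrt 3) ^ 3 - 1 / Real.sqrt 3 = 2 * (-1 / (3 * Real.sqrt 3)) := by
    field_simp
    linear_combination -h3
  linarith

section Whp

variable {M t : ℝ}

lemma Whp_eq_div (ht : t ≠ 0) : Whp M t = (t ^ 3 - t - 2 * M) / t := by
  unfold Whp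
  field_simp

lemma sq_sub_Whp : t ^ 2 - Whp M t = 1 + 2 * M / t := by
  unfold Whp
  ring

lemma four_mul_Whp_add_mul_Whp' (ht : t ≠ 0) :
    4 * Whp M t + t * Whp' M t = 6 * t ^ 2 - 4 - 6 * M / t := by
  unfold Whp Whp'
  field_simp
  ring

lemma Whp'_sq_sub_four_mul_Whp (ht : t ≠ 0) :
    Whp' M t ^ 2 - 4 * Whp M t = 4 + 16 * M / t + 4 * M ^ 2 / t ^ 4 := by
  unfold Whp Whp'
  field_simp
  ring

lemma Whp'_eq_of_cubic_root (ht : t ≠ 0) (hroot : t ^ 3 - t - 2 * M = 0) :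
    Whp' M t = (3 * t ^ 2 - 1) / t := by
  unfold Whp'
  field_simp
  linear_combination -hroot

lemma continuousAt_Whp (ht : t ≠ 0) : ContinuousAt (Whp M) t := by
  unfold Whp
  fun_prop (disch := assumption)

lemma continuousAt_Whp' (ht : t ≠ 0) : ContinuousAt (Whp' M) t := by
  unfold Whp'
  fun_prop (disch := positivity)

end Whp

lemma Whp_pos_of_isGreatest_roots_lt {M tp t : ℝ}
    (htp : IsGreatest {s : ℝ | s ^ 3 - s - 2 * M = 0} tp) (htp0 : 0 < tp) (ht : tp < t) :
    0 < Whp M t := by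
  rw [Whp_eq_div (htp0.trans ht).ne']
  exact div_pos (cubic_pos_of_isGreatest_roots_lt htp ht) (htp0.trans ht)

lemma Whp'_pos_of_cubic_root {M t : ℝ} (ht : 1 / Real.sqrt 3 < t)
    (hroot : t ^ 3 - t - 2 * M = 0) : 0 < Whp' M t := by
  have ht0 : 0 < t := lt_trans (by positivity) ht
  have hsq := pow_lt_pow_left₀ ht (by positivity) two_ne_zero
  rw [div_pow, one_pow, Real.sq_sqrt zero_le_three] at hsq
  rw [Whp'_eq_of_cubic_root ht0.ne' hroot]
  exact div_pos (by linarith) ht0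

section NullBoundary

variable {M tp : ℝ}

lemma tendsto_thetaW_of_Whp_eq_zero (htp : tp ≠ 0) (hW : Whp M tp = 0) (hW' : Whp' M tp ≠ 0) :
    Tendsto (thetaW M) (𝓝 tp) (𝓝 (Real.sqrt 3)) := by
  have hW_cont := continuousAt_Whp (M := M) htp
  have hW'_cont := continuousAt_Whp' (M := M) htp
  have hcont : ContinuousAt (thetaW M) tp := by
    refine ContinuousAt.div (by fun_prop) (by fun_prop) ?_
    simpa [hW] using mul_ne_zero htp hW'
  convert hcont.tendsto using 2
  simp only [thetaW, hW, Real.sqrt_zero]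
  field_simp
  ring

lemma tendsto_betaW_nhdsGT_of_Whp_eq_zero (htp : tp ≠ 0) (hW : Whp M tp = 0)
    (hW' : 0 < Whp' M tp) (hpos : ∀ t > tp, 0 < Whp M t) :
    Tendsto (betaW M) (𝓝[>] tp) atBot := by
  have hW_cont := continuousAt_Whp (M := M) htp
  have hW'_cont := continuousAt_Whp' (M := M) htp
  have hsqrt : Tendsto (fun t => 4 * Real.sqrt (Whp M t)) (𝓝[>] tp) (𝓝[>] 0) := by
    refine tendsto_nhdsWithin_iff.2 ⟨?_, eventually_nhdsWithin_of_forall fun t ht => ?_⟩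
    · have hcont : ContinuousAt (fun t => 4 * Real.sqrt (Whp M t)) tp := by fun_prop
      simpa [hW] using hcont.tendsto.mono_left nhdsWithin_le_nhds
    · have hsqrt_pos := Real.sqrt_pos.2 (hpos t ht)
      exact Set.mem_Ioi.2 (by positivity)
  have hblow : Tendsto (fun t => Whp' M t / (4 * Real.sqrt (Whp M t))) (𝓝[>] tp) atTop :=
    Tendsto.pos_mul_atTop hW' (hW'_cont.tendsto.mono_left nhdsWithin_le_nhds)
      hsqrt.inv_tendsto_nhdsGT_zero
  have hrest : ContinuousAt (fun t => 3 / 2 - Real.sqrt (Whp M t) / t) tp := by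
    fun_prop (disch := assumption)
  have := ((hrest.tendsto.mono_left nhdsWithin_le_nhds).add_atBot
    (tendsto_neg_atTop_atBot.comp hblow)).const_mul_atBot (by norm_num : (0 : ℝ) < 1 / 3)
  exact this.congr fun t => by simp only [betaW, Function.comp, sub_eq_add_neg]

end NullBoundary

section Infinity

variable (M : ℝ)

lemma tendsto_Whp_div_sq_atTop : Tendsto (fun t => Whp M t / t ^ 2) atTop (𝓝 1) := by
  have h := (tendsto_const_nhds (x := (1 : ℝ)).sub
    ((tendsto_pow_atTop two_ne_zero).const_div_atTop 1)).sub
    ((tendsto_pow_atTop three_ne_zero).const_div_atTop (2 * M))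
  rw [sub_zero, sub_zero] at h
  refine h.congr' ?_
  filter_upwards [eventually_ne_atTop 0] with t ht
  unfold Whp
  field_simp

lemma eventually_Whp_pos_atTop : ∀ᶠ t in atTop, 0 < Whp M t := by
  filter_upwards [(tendsto_Whp_div_sq_atTop M).eventually_const_lt one_pos,
    eventually_gt_atTop 0] with t h ht
  exact (div_pos_iff_of_pos_right (by positivity)).1 h

lemma tendsto_sqrt_Whp_div_atTop : Tendsto (fun t => Real.sqrt (Whp M t) / t) atTop (𝓝 1) := by
  have h := (Real.continuous_sqrt.tendsto 1).comp (tendsto_Whp_div_sq_atTop M)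
  rw [Real.sqrt_one] at h
  refine h.congr' ?_
  filter_upwards [eventually_gt_atTop 0] with t ht
  simp [Real.sqrt_div' _ (sq_nonneg t), Real.sqrt_sq ht.le]

lemma tendsto_Whp'_div_atTop : Tendsto (fun t => Whp' M t / t) atTop (𝓝 2) := by
  have h := tendsto_const_nhds (x := (2 : ℝ)).add
    ((tendsto_pow_atTop three_ne_zero).const_div_atTop (2 * M))
  rw [add_zero] at h
  refine h.congr' ?_
  filter_upwards [eventually_ne_atTop 0] with t ht
  unfold Whp'
  field_simp

lemma tendsto_mul_sub_sqrt_Whp_atTop :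
    Tendsto (fun t => t * (t - Real.sqrt (Whp M t))) atTop (𝓝 (1 / 2)) := by
  have h := (tendsto_const_nhds (x := (1 : ℝ)).add (tendsto_id.const_div_atTop (2 * M))).div
    (tendsto_const_nhds (x := (1 : ℝ)).add (tendsto_sqrt_Whp_div_atTop M)) (by norm_num)
  rw [add_zero, show (1 : ℝ) + 1 = 2 by norm_num] at h
  refine h.congr' ?_
  filter_upwards [eventually_gt_atTop 0, eventually_Whp_pos_atTop M] with t ht hW
  rw [Pi.div_apply, id, ← sq_sub_Whp]
  field_simp
  linear_combination Real.sq_sqrt hW.le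

lemma tendsto_mul_Whp'_sub_two_sqrt_Whp_atTop :
    Tendsto (fun t => t * (Whp' M t - 2 * Real.sqrt (Whp M t))) atTop (𝓝 1) := by
  have hnum := (tendsto_const_nhds (x := (4 : ℝ)).add
    (tendsto_id.const_div_atTop (16 * M))).add
    ((tendsto_pow_atTop four_ne_zero).const_div_atTop (4 * M ^ 2))
  have hden := (tendsto_Whp'_div_atTop M).add ((tendsto_sqrt_Whp_div_atTop M).const_mul 2)
  have h := hnum.div hden (by norm_num)
  rw [add_zero, add_zero, show (4 : ℝ) / (2 + 2 * 1) = 1 by norm_num] at h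
  refine h.congr' ?_
  filter_upwards [eventually_gt_atTop 0, eventually_Whp_pos_atTop M,
    hden.eventually_ne (by norm_num : (2 : ℝ) + 2 * 1 ≠ 0)] with t ht hW hne
  rw [Pi.div_apply, div_eq_iff hne, id, ← Whp'_sq_sub_four_mul_Whp ht.ne']
  field_simp
  linear_combination 4 * Real.sq_sqrt hW.le

lemma tendsto_thetaW_atTop : Tendsto (thetaW M) atTop (𝓝 (-Real.sqrt 3)) := by
  have hden : Tendsto (fun t => 6 * (t * (t - Real.sqrt (Whp M t))) - 4 - 6 * M / t) atTop
      (𝓝 (-1)) := by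
    have h := (((tendsto_mul_sub_sqrt_Whp_atTop M).const_mul 6).sub
      (tendsto_const_nhds (x := (4 : ℝ)))).sub
      (tendsto_id.const_div_atTop (6 * M))
    rwa [show (6 : ℝ) * (1 / 2) - 4 - 0 = -1 by norm_num] at h
  have h := ((tendsto_mul_Whp'_sub_two_sqrt_Whp_atTop M).const_mul (Real.sqrt 3)).div hden
    (by norm_num)
  rw [mul_one, div_neg, div_one] at h
  refine h.congr' ?_
  filter_upwards [eventually_ne_atTop 0] with t ht
  rw [Pi.div_apply, thetaW, four_mul_Whp_add_mul_Whp' ht]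
  ring

lemma tendsto_betaW_atTop : Tendsto (betaW M) atTop (𝓝 0) := by
  have h := (((tendsto_const_nhds (x := (3 / 2 : ℝ))).sub (tendsto_sqrt_Whp_div_atTop M)).sub
    ((tendsto_Whp'_div_atTop M).div ((tendsto_sqrt_Whp_div_atTop M).const_mul 4)
      (by norm_num))).const_mul (1 / 3)
  rw [show (1 / 3 : ℝ) * (3 / 2 - 1 - 2 / (4 * 1)) = 0 by norm_num] at h
  refine h.congr' ?_
  filter_upwards [eventually_ne_atTop 0] with t ht
  rw [betaW, Pi.div_apply, mul_div_assoc', div_div_div_cancel_right₀ ht]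

end Infinity

/-- For every `M > −1/(3√3)`:
`θ̂_M(t) → √3` as `t → t₊(M)⁺`, `θ̂_M(t) → −√3` as `t → ∞`,
`β̂_M(t) → −∞` as `t → t₊(M)⁺`, and `β̂_M(t) → 0` as `t → ∞`. -/
theorem explicit_solution_limits (M : ℝ) (hM : -1 / (3 * Real.sqrt 3) < M) (tp : ℝ)
    (htp : IsGreatest {s : ℝ | s ^ 3 - s - 2 * M = 0} tp) :
    Filter.Tendsto (fun t : ℝ => thetaW M t) (nhdsWithin tp (Set.Ioi tp))
      (nhds (Real.sqrt 3)) ∧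
    Filter.Tendsto (fun t : ℝ => thetaW M t) Filter.atTop (nhds (-Real.sqrt 3)) ∧
    Filter.Tendsto (fun t : ℝ => betaW M t) (nhdsWithin tp (Set.Ioi tp))
      Filter.atBot ∧
    Filter.Tendsto (fun t : ℝ => betaW M t) Filter.atTop (nhds 0) := by
  have htp_gt := one_div_sqrt_three_lt_of_isGreatest_roots hM htp
  have htp0 : 0 < tp := lt_trans (by positivity) htp_gt
  have hW : Whp M tp = 0 := by rw [Whp_eq_div htp0.ne', htp.1, zero_div]
  have hW' : 0 < Whp' M tp := Whp'_pos_of_cubic_root htp_gt htp.1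
  exact ⟨(tendsto_thetaW_of_Whp_eq_zero htp0.ne' hW hW'.ne').mono_left nhdsWithin_le_nhds,
    tendsto_thetaW_atTop M,
    tendsto_betaW_nhdsGT_of_Whp_eq_zero htp0.ne' hW hW'
      fun _ ht => Whp_pos_of_isGreatest_roots_lt htp htp0 ht,
    tendsto_betaW_atTop M⟩
end
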